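/- Let L be a finite lattice and g a closure operator on L². Define g^{ω+*} = g^ω g*, where g^ω is the idempotent power of g in the finite monoid of closure operators on L² and g* is the Kleene star. Then g^{ω+*} and g^{ω+*}g^ω are R-equivalent idempotents, and g^{ω+*}g^ω ≤ g^{ω+*}. -/

import Mathlib

/-- Relational composition of binary relations on `α`. -/
def relComp {α : Type*} (f g : Set (α × α)) : Set (α × α) :=
  {p | ∃ z, (p.1, z) ∈ f ∧ (z, p.2) ∈ g}

/-- Powers of a binary relation, the diagonal being the zeroth power. -/
def relPow {α : Type*} (g : Set (α × α)) : ℕ → Set (α × α)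
  | 0 => {p | p.1 = p.2}
  | n + 1 => relComp (relPow g n) g

/-- Kleene star: the partial identity on the fixed-point set of the relation. -/
def relStar {α : Type*} (g : Set (α × α)) : Set (α × α) :=
  {p | p.1 = p.2 ∧ p ∈ g}

/-- A binary relation on a complete lattice is meet-closed if closed under
arbitrary coordinatewise meets. -/
def MeetClosedRel {α : Type*} [CompleteLattice α] (f : Set (α × α)) : Prop :=
  ∀ S : Set (α × α), S ⊆ f → sInf S ∈ f

/-!
Write `e = g^ω` and `s = g*`. As relations, `e` is transitive (`e ∘ e = e`) and `s` is a
coreflexive relation contained in `e`, since every fixed point of `g` is one of each of its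
powers. These three facts alone give the identities `(es)(es) = es`, `(ese)(ese) = ese`,
`(ese)s = es` and `es ⊆ ese` by monotone rewriting in the monoid of relations; the
`R`-equivalence witnesses `e` and `s` are meet-closed because meet-closed relations are closed
under composition and intersection.
-/

open SetRel

lemma relComp_eq_comp {α : Type*} (f g : Set (α × α)) : relComp f g = f ○ g := rfl

lemma relStar_subset_relPow {α : Type*} (g : Set (α × α)) (n : ℕ) :
    relStar g ⊆ relPow g n := by
  rintro ⟨x, y⟩ ⟨hxy, hx⟩
  obtain rfl : x = y := hxy
  induction n with
  | zero => rfl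
  | succ n ih => exact ⟨x, ih, hx⟩

namespace SetRel

variable {α : Type*} {e s : SetRel α α}

lemma comp_self_of_subset_id (hs : s ⊆ SetRel.id) : s ○ s = s := by
  refine subset_antisymm ?_ ?_
  · calc s ○ s ⊆ s ○ SetRel.id := comp_subset_comp_right hs
      _ = s := comp_id s
  · rintro ⟨x, y⟩ hxy
    obtain rfl : x = y := hs hxy
    exact ⟨x, hxy, hxy⟩

lemma comp_subset_comp_comp_of_subset_id (hs : s ⊆ SetRel.id) (hse : s ⊆ e) :
    e ○ s ⊆ e ○ s ○ e :=
  calc e ○ s = e ○ s ○ s := by rw [comp_assoc, comp_self_of_subset_id hs]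
    _ ⊆ e ○ s ○ e := comp_subset_comp_right hse

lemma comp_idem_of_subset_id (he : e ○ e = e) (hs : s ⊆ SetRel.id) (hse : s ⊆ e) :
    e ○ s ○ (e ○ s) = e ○ s := by
  apply subset_antisymm
  · calc e ○ s ○ (e ○ s) ⊆ e ○ SetRel.id ○ (e ○ s) :=
          comp_subset_comp_left (comp_subset_comp_right hs)
      _ = e ○ s := by rw [comp_id, ← comp_assoc, he]
  · calc e ○ s = e ○ s ○ s := by rw [comp_assoc, comp_self_of_subset_id hs]
      _ ⊆ e ○ s ○ (e ○ s) := by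
          refine comp_subset_comp_right ?_
          calc s = s ○ s := (comp_self_of_subset_id hs).symm
            _ ⊆ e ○ s := comp_subset_comp_left hse

lemma comp_comp_idem_of_subset_id (he : e ○ e = e) (hs : s ⊆ SetRel.id) (hse : s ⊆ e) :
    e ○ s ○ e ○ (e ○ s ○ e) = e ○ s ○ e :=
  calc e ○ s ○ e ○ (e ○ s ○ e) = e ○ s ○ (e ○ e) ○ s ○ e := by simp only [comp_assoc]
    _ = e ○ s ○ (e ○ s) ○ e := by rw [he]; simp only [comp_assoc]
    _ = e ○ s ○ e := by rw [comp_idem_of_subset_id he hs hse]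

end SetRel

namespace MeetClosedRel

variable {α : Type*} [CompleteLattice α] {f g : Set (α × α)}

lemma iInf_mem (hf : MeetClosedRel f) {ι : Type*} (x : ι → α × α) (hx : ∀ i, x i ∈ f) :
    ⨅ i, x i ∈ f :=
  hf _ (Set.range_subset_iff.2 hx)

lemma id : MeetClosedRel (SetRel.id : SetRel α α) := by
  intro S hS
  show (sInf S).1 = (sInf S).2
  rw [sInf_eq_iInf', Prod.fst_iInf, Prod.snd_iInf]
  exact iInf_congr fun p => hS p.2

lemma inter (hf : MeetClosedRel f) (hg : MeetClosedRel g) : MeetClosedRel (f ∩ g) :=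
  fun S hS => ⟨hf S (hS.trans Set.inter_subset_left), hg S (hS.trans Set.inter_subset_right)⟩

/-- The meet of chosen midpoints is a midpoint of the meet. -/
lemma comp (hf : MeetClosedRel f) (hg : MeetClosedRel g) : MeetClosedRel (f ○ g) := by
  intro S hS
  choose w hw₁ hw₂ using fun p : S => hS p.2
  refine ⟨⨅ p, w p, ?_, ?_⟩
  · show ((sInf S).1, ⨅ p, w p) ∈ f
    rw [sInf_eq_iInf', Prod.fst_iInf, ← Prod.iInf_mk]
    exact hf.iInf_mem _ hw₁
  · show (⨅ p, w p, (sInf S).2) ∈ g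
    rw [sInf_eq_iInf', Prod.snd_iInf, ← Prod.iInf_mk]
    exact hg.iInf_mem _ hw₂

lemma relPow (hg : MeetClosedRel g) (n : ℕ) : MeetClosedRel (relPow g n) := by
  induction n with
  | zero => exact id
  | succ n ih => exact ih.comp hg

lemma relStar (hg : MeetClosedRel g) : MeetClosedRel (relStar g) :=
  id.inter hg

end MeetClosedRel

theorem omega_star_idempotents_general (α : Type*) [CompleteLattice α]
    (g : Set (α × α)) (hg : MeetClosedRel g)
    (n : ℕ) (hidem : relComp (relPow g n) (relPow g n) = relPow g n) :
    relComp (relComp (relPow g n) (relStar g)) (relComp (relPow g n) (relStar g)) =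
        relComp (relPow g n) (relStar g) ∧
    (relComp
        (relComp (relComp (relPow g n) (relStar g)) (relPow g n))
        (relComp (relComp (relPow g n) (relStar g)) (relPow g n)) =
      relComp (relComp (relPow g n) (relStar g)) (relPow g n)) ∧
    (∃ a : Set (α × α), MeetClosedRel a ∧
      relComp (relComp (relPow g n) (relStar g)) a =
        relComp (relComp (relPow g n) (relStar g)) (relPow g n)) ∧
    (∃ b : Set (α × α), MeetClosedRel b ∧
      relComp (relComp (relComp (relPow g n) (relStar g)) (relPow g n)) b =
        relComp (relPow g n) (relStar g)) ∧
    relComp (relPow g n) (relStar g) ⊆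
      relComp (relComp (relPow g n) (relStar g)) (relPow g n) := by
  simp only [relComp_eq_comp] at hidem ⊢
  have hs : relStar g ⊆ SetRel.id := Set.inter_subset_left
  have hse := relStar_subset_relPow g n
  refine ⟨comp_idem_of_subset_id hidem hs hse,
    comp_comp_idem_of_subset_id hidem hs hse,
    ⟨_, hg.relPow n, rfl⟩, ⟨_, hg.relStar, ?_⟩,
    comp_subset_comp_comp_of_subset_id hs hse⟩
  rw [comp_assoc, comp_idem_of_subset_id hidem hs hse]

/-- Let `L` be a finite lattice and `g` a closure operator on `L²` (given here
by its meet-closed relation), with `g^ω = g^n` the idempotent power of `g` and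
`g^{ω+*} = g^ω g*`.  Then `g^{ω+*}` and `g^{ω+*} g^ω` are `R`-equivalent
idempotents of the finite monoid of closure operators on `L²` (equivalently, of
meet-closed relations), and `g^{ω+*} g^ω ≤ g^{ω+*}` (i.e., as relations,
`g^{ω+*} ⊆ g^{ω+*} g^ω`). -/
theorem omega_star_idempotents (α : Type*) [CompleteLattice α] [Fintype α]
    (g : Set (α × α)) (hg : MeetClosedRel g)
    (n : ℕ) (hn : 0 < n) (hidem : relComp (relPow g n) (relPow g n) = relPow g n) :
    relComp (relComp (relPow g n) (relStar g)) (relComp (relPow g n) (relStar g)) =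
        relComp (relPow g n) (relStar g) ∧
    (relComp
        (relComp (relComp (relPow g n) (relStar g)) (relPow g n))
        (relComp (relComp (relPow g n) (relStar g)) (relPow g n)) =
      relComp (relComp (relPow g n) (relStar g)) (relPow g n)) ∧
    (∃ a : Set (α × α), MeetClosedRel a ∧
      relComp (relComp (relPow g n) (relStar g)) a =
        relComp (relComp (relPow g n) (relStar g)) (relPow g n)) ∧
    (∃ b : Set (α × α), MeetClosedRel b ∧
      relComp (relComp (relComp (relPow g n) (relStar g)) (relPow g n)) b =
        relComp (relPow g n) (relStar g)) ∧
    relComp (relPow g n) (relStar g) ⊆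
      relComp (relComp (relPow g n) (relStar g)) (relPow g n) :=
  omega_star_idempotents_general α g hg n hidem
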